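/- For a proper M-monadic expression E over an alphabet Σ (where M(1) with the given operations is a semiring), the nullability value computed inductively equals the weight associated with the empty word: Null(E) = S(E)(ε). -/
import Mathlib


/-- `M`-monadic expressions over an alphabet `A`, where `K = M(𝟙)`: built from symbols,
`ε`, `∅`, sum, product, star, left/right scalar actions, and `n`-ary functions on `K`. -/
inductive MExp (A K : Type) : Type
  | sym : A → MExp A K
  | eps : MExp A K
  | empty : MExp A K
  | plus : MExp A K → MExp A K → MExp A K
  | times : MExp A K → MExp A K → MExp A K
  | star : MExp A K → MExp A K
  | lact : K → MExp A K → MExp A K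
  | ract : MExp A K → K → MExp A K
  | fn : (n : ℕ) → ((Fin n → K) → K) → (Fin n → MExp A K) → MExp A K

variable {A K : Type}

/-- The nullability value of an expression (for star, `1`, valid on proper expressions). -/
def MExp.null [Semiring K] : MExp A K → K
  | .sym _ => 0
  | .eps => 1
  | .empty => 0
  | .plus e₁ e₂ => e₁.null + e₂.null
  | .times e₁ e₂ => e₁.null * e₂.null
  | .star _ => 1
  | .lact k e => k * e.null
  | .ract e k => e.null * k
  | .fn n f es => f (fun i => (es i).null)

/-- Properness: every starred subexpression has a null nullability value. -/
def MExp.IsProper [Semiring K] : MExp A K → Prop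
  | .sym _ | .eps | .empty => True
  | .plus e₁ e₂ | .times e₁ e₂ => e₁.IsProper ∧ e₂.IsProper
  | .star e => e.IsProper ∧ e.null = 0
  | .lact _ e | .ract e _ => e.IsProper
  | .fn n _ es => ∀ i, (es i).IsProper

/-- Cauchy product of series. -/
def cauchy [Semiring K] (S₁ S₂ : List A → K) : List A → K :=
  fun w => ∑ i ∈ Finset.range (w.length + 1), S₁ (w.take i) * S₂ (w.drop i)

/-- Star of a series: sum over factorizations into nonempty factors. -/
def starSeries [Semiring K] (S : List A → K) : List A → K
  | [] => 1
  | w => ∑ c : Composition w.length, ((w.splitWrtComposition c).map S).prod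

/-- The series associated with an expression. -/
def MExp.series [Semiring K] [DecidableEq A] : MExp A K → List A → K
  | .sym a, w => if w = [a] then 1 else 0
  | .eps, w => if w = [] then 1 else 0
  | .empty, _ => 0
  | .plus e₁ e₂, w => e₁.series w + e₂.series w
  | .times e₁ e₂, w => cauchy e₁.series e₂.series w
  | .star e, w => starSeries e.series w
  | .lact k e, w => k * e.series w
  | .ract e k, w => e.series w * k
  | .fn n f es, w => f (fun i => (es i).series w)

/-- For a proper monadic expression `E`, the nullability value equals the weight of the
empty word: `Null(E) = S(E)(ε)`. -/
theorem null_eq_weight_epsilon [Semiring K] [DecidableEq A]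
    (E : MExp A K) (h : E.IsProper) : E.null = E.series [] := by
  induction E with
  | sym a => simp [MExp.null, MExp.series]
  | eps => simp [MExp.null, MExp.series]
  | empty => simp [MExp.null, MExp.series]
  | plus e₁ e₂ ih₁ ih₂ =>
      obtain ⟨h1, h2⟩ := h
      simp [MExp.null, MExp.series, ih₁ h1, ih₂ h2]
  | times e₁ e₂ ih₁ ih₂ =>
      obtain ⟨h1, h2⟩ := h
      simp [MExp.null, MExp.series, cauchy, ih₁ h1, ih₂ h2]
  | star e ih => simp [MExp.null, MExp.series, starSeries]
  | lact k e ih => simp [MExp.null, MExp.series, ih h]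
  | ract e k ih => simp [MExp.null, MExp.series, ih h]
  | fn n f es ih =>
      simp only [MExp.null, MExp.series]
      congr 1
      funext i
      exact ih i (h i)
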